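/- Let I ⊆ ℝ be an open interval and f : I → ℝ a C³ function satisfying 2 f′(z) f‴(z) − 3 (f″(z))² = 0 on I. If f″ vanishes identically on I, then there exist constants C₃, C₄ with f(z) = C₃z + C₄ on I. If instead f″ vanishes nowhere on I, then there exist constants C₃, C₄, C₅ with C₄ ≠ 0 and z + C₃ ≠ 0 for all z ∈ I, such that f(z) = C₄/(z+C₃) + C₅ on I. -/

import Mathlib

/-!
Put `g = f′`, so that the equation reads `2 g g″ = 3 (g′)²`. Where `g′ ≠ 0` this says exactly that
`(g / g′)′ = 1 - g g″ / (g′)² = -1/2`, so `g / g′ = -(z + C₃)/2` for a constant `C₃`. Then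
`(g · (z + C₃)²)′ = (z + C₃) (g′ (z + C₃) + 2 g) = 0`, i.e. `f′ = C₄ / (z + C₃)²`, and one more
integration gives `f`. Every integration is the mean value theorem on the connected set `I`.
-/

theorem ContDiffOn.hasDerivAt_deriv {𝕜 F : Type*} [NontriviallyNormedField 𝕜]
    [NormedAddCommGroup F] [NormedSpace 𝕜 F] {n : WithTop ℕ∞} {f : 𝕜 → F} {s : Set 𝕜} {z : 𝕜}
    (hf : ContDiffOn 𝕜 n f s) (hs : IsOpen s) (hn : n ≠ 0) (hz : z ∈ s) :
    HasDerivAt f (deriv f z) z :=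
  ((hf.differentiableOn hn).differentiableAt (hs.mem_nhds hz)).hasDerivAt

theorem IsOpen.exists_eq_add_of_hasDerivAt {𝕜 G : Type*} [RCLike 𝕜] [NormedAddCommGroup G]
    [NormedSpace 𝕜 G] {s : Set 𝕜} (hs : IsOpen s) (hs' : IsPreconnected s) {f F g : 𝕜 → G}
    (hf : ∀ z ∈ s, HasDerivAt f (g z) z) (hF : ∀ z ∈ s, HasDerivAt F (g z) z) :
    ∃ C, ∀ z ∈ s, f z = F z + C :=
  hs.exists_eq_add_of_deriv_eq hs'
    (fun z hz => (hf z hz).differentiableAt.differentiableWithinAt)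
    (fun z hz => (hF z hz).differentiableAt.differentiableWithinAt)
    (fun z hz => (hf z hz).deriv.trans (hF z hz).deriv.symm)

section Liouville

variable {s : Set ℝ} {g g' g'' : ℝ → ℝ}

theorem exists_two_mul_eq_neg_add_mul_of_two_mul_mul_eq_three_mul_sq (hs : IsOpen s)
    (hs' : IsPreconnected s) (hg : ∀ z ∈ s, HasDerivAt g (g' z) z)
    (hg' : ∀ z ∈ s, HasDerivAt g' (g'' z) z)
    (hode : ∀ z ∈ s, 2 * g z * g'' z = 3 * g' z ^ 2) (hg'0 : ∀ z ∈ s, g' z ≠ 0) :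
    ∃ c, ∀ z ∈ s, 2 * g z = -(z + c) * g' z := by
  have hquot : ∀ z ∈ s, HasDerivAt (fun w => g w / g' w) (-1 / 2) z := fun z hz =>
    ((hg z hz).div (hg' z hz) (hg'0 z hz)).congr_deriv <| by
      have := hg'0 z hz
      field_simp
      linarith [hode z hz]
  obtain ⟨C, hC⟩ := hs.exists_eq_add_of_hasDerivAt hs' hquot
    (F := fun z => -1 / 2 * z) fun z _ => by simpa using (hasDerivAt_id z).const_mul (-1 / 2)
  refine ⟨-2 * C, fun z hz => ?_⟩
  have h := hC z hz
  field_simp [hg'0 z hz] at h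
  linarith

theorem exists_eq_div_sq_of_two_mul_eq_neg_add_mul (hs : IsOpen s) (hs' : IsPreconnected s)
    {c : ℝ} (hg : ∀ z ∈ s, HasDerivAt g (g' z) z) (hg0 : ∀ z ∈ s, g z ≠ 0)
    (hlin : ∀ z ∈ s, 2 * g z = -(z + c) * g' z) :
    ∃ A, A ≠ 0 ∧ (∀ z ∈ s, z + c ≠ 0) ∧ ∀ z ∈ s, g z = A / (z + c) ^ 2 := by
  have hc : ∀ z ∈ s, z + c ≠ 0 := fun z hz hzc => hg0 z hz <| by
    simpa [hzc] using hlin z hz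
  have hprod : ∀ z ∈ s, HasDerivAt (fun w => g w * (w + c) ^ 2) 0 z := fun z hz =>
    ((hg z hz).mul (((hasDerivAt_id z).add_const c).pow 2)).congr_deriv <| by
      simp only [id, Nat.cast_ofNat, Pi.pow_apply]
      linear_combination (z + c) * hlin z hz
  obtain ⟨A, hA⟩ := hs.exists_eq_add_of_hasDerivAt hs' hprod (F := fun _ => 0)
    fun z _ => hasDerivAt_const z 0
  rcases s.eq_empty_or_nonempty with rfl | ⟨z₀, hz₀⟩
  · exact ⟨1, one_ne_zero, by simp, by simp⟩
  refine ⟨A, ?_, hc, fun z hz => ?_⟩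
  · rw [← zero_add A, ← hA z₀ hz₀]
    exact mul_ne_zero (hg0 z₀ hz₀) (pow_ne_zero 2 (hc z₀ hz₀))
  · rw [eq_div_iff (pow_ne_zero 2 (hc z hz)), hA z hz, zero_add]

theorem exists_eq_div_sq_of_two_mul_mul_eq_three_mul_sq (hs : IsOpen s) (hs' : IsPreconnected s)
    (hg : ∀ z ∈ s, HasDerivAt g (g' z) z) (hg' : ∀ z ∈ s, HasDerivAt g' (g'' z) z)
    (hode : ∀ z ∈ s, 2 * g z * g'' z = 3 * g' z ^ 2) (hg'0 : ∀ z ∈ s, g' z ≠ 0) :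
    ∃ c A, A ≠ 0 ∧ (∀ z ∈ s, z + c ≠ 0) ∧ ∀ z ∈ s, g z = A / (z + c) ^ 2 := by
  have hg0 : ∀ z ∈ s, g z ≠ 0 := fun z hz h0 => hg'0 z hz <| by
    simpa [h0] using hode z hz
  obtain ⟨c, hlin⟩ :=
    exists_two_mul_eq_neg_add_mul_of_two_mul_mul_eq_three_mul_sq hs hs' hg hg' hode hg'0
  exact ⟨c, exists_eq_div_sq_of_two_mul_eq_neg_add_mul hs hs' hg hg0 hlin⟩

end Liouville

theorem stmt_8 (I : Set ℝ) (hIopen : IsOpen I) (hIconn : I.OrdConnected)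
    (f : ℝ → ℝ) (hf : ContDiffOn ℝ 3 f I)
    (heq : ∀ z ∈ I,
      2 * deriv f z * deriv (deriv (deriv f)) z - 3 * (deriv (deriv f) z) ^ 2 = 0) :
    ((∀ z ∈ I, deriv (deriv f) z = 0) →
      ∃ C₃ C₄ : ℝ, ∀ z ∈ I, f z = C₃ * z + C₄) ∧
    ((∀ z ∈ I, deriv (deriv f) z ≠ 0) →
      ∃ C₃ C₄ C₅ : ℝ, C₄ ≠ 0 ∧ (∀ z ∈ I, z + C₃ ≠ 0) ∧
        ∀ z ∈ I, f z = C₄ / (z + C₃) + C₅) := by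
  have hI := hIconn.isPreconnected
  have hf' : ContDiffOn ℝ 2 (deriv f) I := hf.deriv_of_isOpen hIopen (by norm_num)
  have hf'' : ContDiffOn ℝ 1 (deriv (deriv f)) I := hf'.deriv_of_isOpen hIopen (by norm_num)
  have d1 := fun z (hz : z ∈ I) => hf.hasDerivAt_deriv hIopen (by norm_num) hz
  have d2 := fun z (hz : z ∈ I) => hf'.hasDerivAt_deriv hIopen (by norm_num) hz
  have d3 := fun z (hz : z ∈ I) => hf''.hasDerivAt_deriv hIopen one_ne_zero hz
  refine ⟨fun hf''0 => ?_, fun hf''ne => ?_⟩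
  · obtain ⟨a, ha⟩ := hIopen.exists_eq_add_of_hasDerivAt hI (F := fun _ => 0)
      (fun z hz => hf''0 z hz ▸ d2 z hz) fun z _ => hasDerivAt_const z 0
    obtain ⟨b, hb⟩ := hIopen.exists_eq_add_of_hasDerivAt hI d1 (F := fun z => a * z)
      fun z hz => by simpa [ha z hz] using (hasDerivAt_id z).const_mul a
    exact ⟨a, b, hb⟩
  · obtain ⟨c, A, hA, hc, hfA⟩ := exists_eq_div_sq_of_two_mul_mul_eq_three_mul_sq hIopen hI
      d2 d3 (fun z hz => by linarith [heq z hz]) hf''ne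
    obtain ⟨C, hC⟩ := hIopen.exists_eq_add_of_hasDerivAt hI d1 (F := fun z => -A / (z + c))
      fun z hz => ((hasDerivAt_const z (-A)).div ((hasDerivAt_id z).add_const c)
        (hc z hz)).congr_deriv (by simp [hfA z hz])
    exact ⟨c, -A, C, neg_ne_zero.2 hA, hc, hC⟩
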